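/- Let T ∈ B_A(H) admit an A-adjoint T^{♯} and let q be a nonzero complex number with |q| ≤ 1. Then (|q|²/4)·‖T^{♯}T + TT^{♯}‖_A ≤ w_{q,A}(T)². -/

import Mathlib

/-!
Write `B = A^{1/2}`, so that `⟨x, y⟩_A = ⟪B y, B x⟫` and `‖x‖_A = ‖B x‖`.

Given an `A`-unit vector `x`, the rank hypothesis provides an `A`-unit vector `z` that is
`A`-orthogonal to `x`, and for one of the two signs `y = q̄ x ± √(1 - |q|²) z` satisfies
`‖y‖_A = 1`, `⟨x, y⟩_A = q` and `|⟨Tx, y⟩_A| ≥ |q| |⟨Tx, x⟩_A|`. Hence `q T` has `A`-numerical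
radius at most `w_{q,A}(T)`.

For any `T` with `A`-adjoint `S` and `A`-numerical radius at most `w`, the `A`-selfadjoint
operators `P = T + S` and `Q = i (S - T)` have `A`-numerical radius at most `2 w`; for an
`A`-selfadjoint operator the `A`-norm is bounded by the `A`-numerical radius (polarization), and
`2 (S T + T S) = P² + Q²`, so `‖S T + T S‖_A ≤ 4 w²`. Applied to `q T`, whose `A`-adjoint is
`q̄ S`, this is the theorem.

That `w_{q,A}(T)` is finite at all comes from `‖T x‖_A² ≤ ‖S T x‖_A ‖x‖_A`; iterating this
inequality for the `A`-selfadjoint `R = S T` gives `‖R x‖_A^{2^n} ≤ ‖R^{2^n} x‖_A` on the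
`A`-unit ball, whence `‖R x‖_A ≤ ‖R‖`.
-/

open scoped InnerProductSpace

variable {H : Type*} [NormedAddCommGroup H] [InnerProductSpace ℂ H] [CompleteSpace H]

/-- The semi-inner product induced by `A`: `⟨x,y⟩_A = ⟨Ax,y⟩`
(linear in the first argument, as in the paper). -/
noncomputable def sip (A : H →L[ℂ] H) (x y : H) : ℂ := @inner ℂ H _ y (A x)

/-- The seminorm induced by `A`. -/
noncomputable def normA (A : H →L[ℂ] H) (x : H) : ℝ := Real.sqrt (sip A x x).re

/-- The `A`-`q`-numerical radius of `T`. -/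
noncomputable def wqA (A T : H →L[ℂ] H) (q : ℂ) : ℝ :=
  sSup {r : ℝ | ∃ x y : H, normA A x = 1 ∧ normA A y = 1 ∧ sip A x y = q ∧
    r = ‖sip A (T x) y‖}

/-- The `A`-operator seminorm of `T`. -/
noncomputable def opNormA (A T : H →L[ℂ] H) : ℝ :=
  sSup {r : ℝ | ∃ x ∈ closure (Set.range fun v => A v), x ≠ 0 ∧ r = normA A (T x) / normA A x}

open scoped ComplexConjugate

lemma le_of_forall_pow_two_pow_le_mul_pow {a r K : ℝ} (hr : 0 ≤ r)
    (h : ∀ n : ℕ, a ^ 2 ^ n ≤ K * r ^ 2 ^ n) : a ≤ r := by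
  by_contra! hra
  rcases hr.eq_or_lt with rfl | hr
  · simpa [hra.not_ge] using h 0
  · have hc : 1 < a / r := (one_lt_div hr).2 hra
    obtain ⟨n, hn⟩ := pow_unbounded_of_one_lt K hc
    have hle : (a / r) ^ n ≤ (a / r) ^ 2 ^ n := pow_le_pow_right₀ hc.le Nat.lt_two_pow_self.le
    have hK : (a / r) ^ 2 ^ n ≤ K := by
      rw [div_pow, div_le_iff₀ (by positivity)]
      exact h n
    linarith

section SemiInnerProduct

variable {𝕜 E F : Type*} [RCLike 𝕜] [NormedAddCommGroup E] [InnerProductSpace 𝕜 E]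
  [NormedAddCommGroup F] [InnerProductSpace 𝕜 F]

def IsAdjointWrt (B : E →L[𝕜] F) (T S : E →L[𝕜] E) : Prop :=
  ∀ u v, ⟪B (S u), B v⟫_𝕜 = ⟪B u, B (T v)⟫_𝕜

namespace IsAdjointWrt

variable {B : E →L[𝕜] F} {T S T' S' R : E →L[𝕜] E}

lemma symm (h : IsAdjointWrt B T S) : IsAdjointWrt B S T := fun u v => by
  rw [← inner_conj_symm, ← h v u, inner_conj_symm]

lemma mul (h : IsAdjointWrt B T S) (h' : IsAdjointWrt B T' S') :
    IsAdjointWrt B (T * T') (S' * S) := fun u v => by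
  rw [mul_apply_eq_comp, mul_apply_eq_comp, h', h]

lemma pow (h : IsAdjointWrt B R R) (n : ℕ) : IsAdjointWrt B (R ^ n) (R ^ n) := by
  induction n with
  | zero => intro u v; simp
  | succ n ih => simpa only [← pow_succ, ← pow_succ'] using ih.mul h

lemma add (h : IsAdjointWrt B T S) (h' : IsAdjointWrt B T' S') :
    IsAdjointWrt B (T + T') (S + S') := fun u v => by
  simp only [add_apply, map_add, inner_add_left, inner_add_right, h u v, h' u v]

lemma sub (h : IsAdjointWrt B T S) (h' : IsAdjointWrt B T' S') :
    IsAdjointWrt B (T - T') (S - S') := fun u v => by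
  simp only [sub_apply, map_sub, inner_sub_left, inner_sub_right, h u v, h' u v]

lemma smul (h : IsAdjointWrt B T S) (c : 𝕜) : IsAdjointWrt B (c • T) (conj c • S) :=
  fun u v => by
  simp only [smul_apply, map_smul, inner_smul_left, inner_smul_right, RCLike.conj_conj, h u v]

lemma norm_inner_apply_eq (h : IsAdjointWrt B T S) (z : E) :
    ‖⟪B z, B (S z)⟫_𝕜‖ = ‖⟪B z, B (T z)⟫_𝕜‖ := by
  rw [norm_inner_symm, h z z]

lemma norm_apply_sq_le (h : IsAdjointWrt B T S) (x : E) :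
    ‖B (T x)‖ ^ 2 ≤ ‖B (S (T x))‖ * ‖B x‖ :=
  calc ‖B (T x)‖ ^ 2 = RCLike.re ⟪B (T x), B (T x)⟫_𝕜 := (inner_self_eq_norm_sq _).symm
    _ = RCLike.re ⟪B x, B (S (T x))⟫_𝕜 := by rw [h.symm]
    _ ≤ ‖B x‖ * ‖B (S (T x))‖ := (RCLike.re_le_norm _).trans (norm_inner_le_norm _ _)
    _ = ‖B (S (T x))‖ * ‖B x‖ := mul_comm _ _

lemma norm_apply_le_opNorm (h : IsAdjointWrt B R R) {x : E} (hx : ‖B x‖ ≤ 1) :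
    ‖B (R x)‖ ≤ ‖R‖ := by
  have key : ∀ n : ℕ, ‖B (R x)‖ ^ 2 ^ n ≤ ‖B ((R ^ 2 ^ n) x)‖ := by
    intro n
    induction n with
    | zero => simp
    | succ n ih =>
      calc ‖B (R x)‖ ^ 2 ^ (n + 1) = (‖B (R x)‖ ^ 2 ^ n) ^ 2 := by rw [pow_succ, pow_mul]
        _ ≤ ‖B ((R ^ 2 ^ n) x)‖ ^ 2 := by gcongr
        _ ≤ ‖B ((R ^ 2 ^ n) ((R ^ 2 ^ n) x))‖ * ‖B x‖ := (h.pow _).norm_apply_sq_le x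
        _ ≤ ‖B ((R ^ 2 ^ (n + 1)) x)‖ := by
          rw [pow_succ, pow_mul, sq, mul_apply_eq_comp]
          exact mul_le_of_le_one_right (norm_nonneg _) hx
  refine le_of_forall_pow_two_pow_le_mul_pow (K := ‖B‖ * ‖x‖) (norm_nonneg R) fun n => ?_
  calc ‖B (R x)‖ ^ 2 ^ n ≤ ‖B ((R ^ 2 ^ n) x)‖ := key n
    _ ≤ ‖B‖ * (‖R ^ 2 ^ n‖ * ‖x‖) := B.le_opNorm_of_le ((R ^ 2 ^ n).le_opNorm x)
    _ ≤ ‖B‖ * (‖R‖ ^ 2 ^ n * ‖x‖) := by gcongr; exact norm_pow_le' R (by positivity)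
    _ = ‖B‖ * ‖x‖ * ‖R‖ ^ 2 ^ n := by ring

lemma norm_apply_sq_le_opNorm (h : IsAdjointWrt B T S) {x : E} (hx : ‖B x‖ ≤ 1) :
    ‖B (T x)‖ ^ 2 ≤ ‖S * T‖ :=
  calc ‖B (T x)‖ ^ 2 ≤ ‖B (S (T x))‖ * ‖B x‖ := h.norm_apply_sq_le x
    _ ≤ ‖B ((S * T) x)‖ := mul_le_of_le_one_right (norm_nonneg _) hx
    _ ≤ ‖S * T‖ := (h.symm.mul h).norm_apply_le_opNorm hx

lemma norm_apply_le_of_norm_inner_le (h : IsAdjointWrt B R R) {w : ℝ} (hw : 0 ≤ w)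
    (hnum : ∀ z, ‖⟪B z, B (R z)⟫_𝕜‖ ≤ w * ‖B z‖ ^ 2) (v : E) :
    ‖B (R v)‖ ≤ w * ‖B v‖ := by
  have polar (u z : E) :
      4 * RCLike.re ⟪B u, B (R z)⟫_𝕜 ≤ 2 * w * (‖B z‖ ^ 2 + ‖B u‖ ^ 2) := by
    have hsum : 4 * RCLike.re ⟪B u, B (R z)⟫_𝕜 =
        RCLike.re ⟪B (z + u), B (R (z + u))⟫_𝕜 - RCLike.re ⟪B (z - u), B (R (z - u))⟫_𝕜 := by
      have hzu : ⟪B z, B (R u)⟫_𝕜 = conj ⟪B u, B (R z)⟫_𝕜 := by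
        rw [← h z u, inner_conj_symm]
      simp only [map_add, map_sub, inner_add_left, inner_add_right, inner_sub_left,
        inner_sub_right, hzu, RCLike.conj_re]
      ring
    have hpar : ‖B (z + u)‖ ^ 2 + ‖B (z - u)‖ ^ 2 = 2 * (‖B z‖ ^ 2 + ‖B u‖ ^ 2) := by
      simpa only [map_add, map_sub, ← sq] using parallelogram_law_with_norm 𝕜 (B z) (B u)
    have h₁ := (abs_le.mp ((RCLike.abs_re_le_norm _).trans (hnum (z + u)))).2
    have h₂ := (abs_le.mp ((RCLike.abs_re_le_norm _).trans (hnum (z - u)))).1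
    nlinarith
  set N := ‖B (R v)‖
  -- `polar` at `u = t • R v`: a quadratic in `t` that is nonnegative, so its discriminant is `≤ 0`
  have quad (t : ℝ) :
      0 ≤ (2 * w * N ^ 2) * (t * t) + (-4 * N ^ 2) * t + 2 * w * ‖B v‖ ^ 2 := by
    have := polar ((t : 𝕜) • R v) v
    rw [map_smul, inner_smul_left, RCLike.conj_ofReal, RCLike.re_ofReal_mul,
      inner_self_eq_norm_sq, norm_smul, RCLike.norm_ofReal, mul_pow, sq_abs] at this
    nlinarith
  have hdisc := discrim_le_zero quad
  rw [discrim] at hdisc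
  rcases (norm_nonneg (B (R v))).eq_or_lt with hN | hN
  · rw [show N = 0 from hN.symm]; positivity
  have hsq : N ^ 2 ≤ (w * ‖B v‖) ^ 2 := by
    by_contra! hlt
    nlinarith [mul_pos (pow_pos hN 2) (sub_pos.2 hlt)]
  exact (pow_le_pow_iff_left₀ hN.le (by positivity) two_ne_zero).1 hsq

end IsAdjointWrt

lemma Submodule.exists_mem_ne_zero_inner_eq_zero {V : Submodule 𝕜 F}
    (hV : 2 ≤ Module.rank 𝕜 V) (x : F) : ∃ y ∈ V, y ≠ 0 ∧ ⟪x, y⟫_𝕜 = 0 := by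
  by_contra! hne
  have hinj : Function.Injective ((innerₛₗ 𝕜 x).comp V.subtype) := by
    rw [← LinearMap.ker_eq_bot, LinearMap.ker_eq_bot']
    intro y hy
    by_contra hy0
    exact hne y y.2 (by simpa using hy0) hy
  have hle := LinearMap.lift_rank_le_of_injective _ hinj
  rw [Module.rank_self, Cardinal.lift_one, Cardinal.lift_le_one_iff] at hle
  exact absurd (hV.trans hle) (by norm_num)

lemma exists_norm_apply_eq_one_inner_eq_zero {B : E →L[𝕜] F}
    (hB : 2 ≤ Module.rank 𝕜 (LinearMap.range (B : E →ₗ[𝕜] F))) (w : F) :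
    ∃ z, ‖B z‖ = 1 ∧ ⟪w, B z⟫_𝕜 = 0 := by
  obtain ⟨_, ⟨z, rfl⟩, hz, hwz⟩ := Submodule.exists_mem_ne_zero_inner_eq_zero hB w
  have hpos : 0 < ‖B z‖ := norm_pos_iff.2 hz
  refine ⟨((‖B z‖⁻¹ : ℝ) : 𝕜) • z, ?_, ?_⟩
  · rw [map_smul, norm_smul, RCLike.norm_ofReal, abs_inv, abs_norm, inv_mul_cancel₀ hpos.ne']
  · rw [map_smul, inner_smul_right, show ⟪w, B z⟫_𝕜 = 0 from hwz, mul_zero]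

lemma exists_norm_apply_eq_one_inner_eq_and_le {B : E →L[𝕜] F} {x z : E} (hx : ‖B x‖ = 1)
    (hz : ‖B z‖ = 1) (hxz : ⟪B x, B z⟫_𝕜 = 0) {q : 𝕜} (hq : ‖q‖ ≤ 1) (w : F) :
    ∃ y, ‖B y‖ = 1 ∧ ⟪B y, B x⟫_𝕜 = q ∧ ‖q‖ * ‖⟪B x, w⟫_𝕜‖ ≤ ‖⟪B y, w⟫_𝕜‖ := by
  set a := q * ⟪B x, w⟫_𝕜
  set b := (Real.sqrt (1 - ‖q‖ ^ 2) : 𝕜) * ⟪B z, w⟫_𝕜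
  -- `2 a = (a + b) + (a - b)`, so one of the two choices of sign does not decrease `‖a‖`
  obtain ⟨s, hs, hab⟩ :
      ∃ s : ℝ, s ^ 2 = 1 - ‖q‖ ^ 2 ∧ ‖a‖ ≤ ‖a + (s : 𝕜) * ⟪B z, w⟫_𝕜‖ := by
    have hsq : Real.sqrt (1 - ‖q‖ ^ 2) ^ 2 = 1 - ‖q‖ ^ 2 :=
      Real.sq_sqrt (by nlinarith [norm_nonneg q])
    have htri : ‖a + a‖ ≤ ‖a + b‖ + ‖a - b‖ := by
      simpa using norm_add_le (a + b) (a - b)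
    rw [← two_mul, norm_mul, RCLike.norm_two] at htri
    by_cases hle : ‖a‖ ≤ ‖a + b‖
    · exact ⟨_, hsq, hle⟩
    · refine ⟨-Real.sqrt (1 - ‖q‖ ^ 2), by rwa [neg_sq], ?_⟩
      push_cast
      rw [neg_mul, ← sub_eq_add_neg]
      linarith
  have hzx : ⟪B z, B x⟫_𝕜 = 0 := by rw [← inner_conj_symm, hxz, map_zero]
  refine ⟨conj q • x + (s : 𝕜) • z, ?_, ?_, ?_⟩
  · have hpyth := norm_add_sq_eq_norm_sq_add_norm_sq_of_inner_eq_zero (conj q • B x)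
      ((s : 𝕜) • B z) (by rw [inner_smul_left, inner_smul_right, hxz, mul_zero, mul_zero])
    rw [norm_smul, norm_smul, RCLike.norm_conj, RCLike.norm_ofReal, hx, hz, mul_one, mul_one,
      abs_mul_abs_self] at hpyth
    rw [map_add, map_smul, map_smul]
    refine (pow_eq_one_iff_of_nonneg (norm_nonneg _) two_ne_zero).1 ?_
    rw [sq, hpyth]
    linear_combination hs
  · simp [inner_add_left, inner_smul_left, hzx, inner_self_eq_norm_sq_to_K, hx]
  · simpa [a, inner_add_left, inner_smul_left, norm_mul] using hab

lemma norm_inner_le_mul_sq_of_norm_eq_one {B : E →L[𝕜] F} {T : E →L[𝕜] E} {w : ℝ}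
    (h : ∀ z, ‖B z‖ = 1 → ‖⟪B z, B (T z)⟫_𝕜‖ ≤ w) (z : E) :
    ‖⟪B z, B (T z)⟫_𝕜‖ ≤ w * ‖B z‖ ^ 2 := by
  rcases (norm_nonneg (B z)).eq_or_lt with hz | hz
  · rw [← hz, norm_eq_zero.1 hz.symm, inner_zero_left, norm_zero]
    simp
  set t := ‖B z‖
  have hunit : ‖B (((t⁻¹ : ℝ) : 𝕜) • z)‖ = 1 := by
    rw [map_smul, norm_smul, RCLike.norm_ofReal, abs_inv, abs_norm, inv_mul_cancel₀ hz.ne']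
  have := h _ hunit
  simp only [map_smul, inner_smul_left, inner_smul_right, RCLike.conj_ofReal] at this
  rw [← mul_assoc, norm_mul, norm_mul, RCLike.norm_ofReal, abs_inv, abs_norm, ← sq,
    inv_pow] at this
  rwa [inv_mul_le_iff₀ (by positivity), mul_comm] at this

end SemiInnerProduct

namespace IsAdjointWrt

variable {E F : Type*} [NormedAddCommGroup E] [InnerProductSpace ℂ E]
  [NormedAddCommGroup F] [InnerProductSpace ℂ F] {B : E →L[ℂ] F} {T S : E →L[ℂ] E}

lemma norm_apply_mul_add_mul_le (h : IsAdjointWrt B T S) {w : ℝ} (hw : 0 ≤ w)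
    (hnum : ∀ z, ‖⟪B z, B (T z)⟫_ℂ‖ ≤ w * ‖B z‖ ^ 2) (u : E) :
    ‖B ((S * T + T * S) u)‖ ≤ 4 * w ^ 2 * ‖B u‖ := by
  set P := T + S
  set Q := Complex.I • (S - T)
  have hP : IsAdjointWrt B P P := by simpa only [P, add_comm S] using h.add h.symm
  have hQ : IsAdjointWrt B Q Q := by
    have := (h.symm.sub h).smul Complex.I
    rwa [Complex.conj_I, neg_smul, ← smul_neg, neg_sub] at this
  have hPnum (z : E) : ‖⟪B z, B (P z)⟫_ℂ‖ ≤ 2 * w * ‖B z‖ ^ 2 := by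
    calc ‖⟪B z, B (P z)⟫_ℂ‖
      _ ≤ ‖⟪B z, B (T z)⟫_ℂ‖ + ‖⟪B z, B (S z)⟫_ℂ‖ := by
          rw [add_apply, map_add, inner_add_right]; exact norm_add_le _ _
      _ ≤ 2 * w * ‖B z‖ ^ 2 := by rw [h.norm_inner_apply_eq]; linarith [hnum z]
  have hQnum (z : E) : ‖⟪B z, B (Q z)⟫_ℂ‖ ≤ 2 * w * ‖B z‖ ^ 2 := by
    calc ‖⟪B z, B (Q z)⟫_ℂ‖
      _ ≤ ‖⟪B z, B (S z)⟫_ℂ‖ + ‖⟪B z, B (T z)⟫_ℂ‖ := by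
          rw [smul_apply, sub_apply, map_smul, map_sub, inner_smul_right, inner_sub_right,
            norm_mul, Complex.norm_I, one_mul]
          exact norm_sub_le _ _
      _ ≤ 2 * w * ‖B z‖ ^ 2 := by rw [h.norm_inner_apply_eq]; linarith [hnum z]
  have hsplit : (S * T + T * S) + (S * T + T * S) = P * P + Q * Q := by
    simp only [P, Q, smul_mul_smul_comm, Complex.I_mul_I, neg_one_smul]
    noncomm_ring
  have hPP := hP.norm_apply_le_of_norm_inner_le (by positivity) hPnum
  have hQQ := hQ.norm_apply_le_of_norm_inner_le (by positivity) hQnum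
  have hsum : 2 * ‖B ((S * T + T * S) u)‖ ≤ 8 * w ^ 2 * ‖B u‖ :=
    calc 2 * ‖B ((S * T + T * S) u)‖ = ‖(2 : ℝ) • B ((S * T + T * S) u)‖ := by
          rw [norm_smul, Real.norm_two]
      _ = ‖B ((P * P + Q * Q) u)‖ := by
          rw [← hsplit]; simp only [add_apply, map_add, two_smul]
      _ ≤ ‖B (P (P u))‖ + ‖B (Q (Q u))‖ := by
          rw [add_apply, map_add, mul_apply_eq_comp, mul_apply_eq_comp]; exact norm_add_le _ _
      _ ≤ 2 * w * (2 * w * ‖B u‖) + 2 * w * (2 * w * ‖B u‖) := by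
          gcongr
          · exact (hPP _).trans (by gcongr; exact hPP u)
          · exact (hQQ _).trans (by gcongr; exact hQQ u)
      _ = 8 * w ^ 2 * ‖B u‖ := by ring
  linarith

end IsAdjointWrt

section PositiveOperator

variable {A : H →L[ℂ] H}

lemma sqrt_apply_sqrt_apply (hA : A.IsPositive) (x : H) : CFC.sqrt A (CFC.sqrt A x) = A x := by
  rw [← mul_apply_eq_comp,
    CFC.sqrt_mul_sqrt_self A ((ContinuousLinearMap.nonneg_iff_isPositive A).2 hA)]

lemma inner_sqrt_apply_sqrt_apply (hA : A.IsPositive) (x y : H) :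
    ⟪CFC.sqrt A x, CFC.sqrt A y⟫_ℂ = ⟪x, A y⟫_ℂ :=
  calc ⟪CFC.sqrt A x, CFC.sqrt A y⟫_ℂ = ⟪x, CFC.sqrt A (CFC.sqrt A y)⟫_ℂ :=
        (CFC.sqrt_nonneg A).isSelfAdjoint.isSymmetric x _
    _ = ⟪x, A y⟫_ℂ := by rw [sqrt_apply_sqrt_apply hA]

lemma range_le_range_sqrt (hA : A.IsPositive) :
    LinearMap.range (A : H →ₗ[ℂ] H) ≤
      LinearMap.range ((CFC.sqrt A : H →L[ℂ] H) : H →ₗ[ℂ] H) := by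
  rintro _ ⟨x, rfl⟩
  exact ⟨CFC.sqrt A x, sqrt_apply_sqrt_apply hA x⟩

lemma sip_eq_inner_sqrt (hA : A.IsPositive) (x y : H) :
    sip A x y = ⟪CFC.sqrt A y, CFC.sqrt A x⟫_ℂ :=
  (inner_sqrt_apply_sqrt_apply hA y x).symm

lemma normA_eq_norm_sqrt (hA : A.IsPositive) (x : H) :
    normA A x = ‖CFC.sqrt A x‖ := by
  rw [normA, sip_eq_inner_sqrt hA, ← RCLike.re_to_complex, inner_self_eq_norm_sq,
    Real.sqrt_sq (norm_nonneg _)]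

lemma isAdjointWrt_sqrt {T S : H →L[ℂ] H} (hA : A.IsPositive)
    (hS : A ∘L S = ContinuousLinearMap.adjoint T ∘L A) : IsAdjointWrt (CFC.sqrt A) T S :=
  fun u v => by
  have hAS : A (S u) = ContinuousLinearMap.adjoint T (A u) := DFunLike.congr_fun hS u
  rw [inner_sqrt_apply_sqrt_apply hA, inner_sqrt_apply_sqrt_apply hA]
  calc ⟪S u, A v⟫_ℂ = ⟪A (S u), v⟫_ℂ := (hA.isSelfAdjoint.isSymmetric _ _).symm
    _ = ⟪A u, T v⟫_ℂ := by rw [hAS, ContinuousLinearMap.adjoint_inner_left]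
    _ = ⟪u, A (T v)⟫_ℂ := hA.isSelfAdjoint.isSymmetric _ _

lemma norm_sip_le_wqA {T S : H →L[ℂ] H} (hA : A.IsPositive)
    (hTS : IsAdjointWrt (CFC.sqrt A) T S) {q : ℂ} {x y : H} (hx : normA A x = 1)
    (hy : normA A y = 1) (hxy : sip A x y = q) : ‖sip A (T x) y‖ ≤ wqA A T q := by
  refine le_csSup ⟨Real.sqrt ‖S * T‖, ?_⟩ ⟨x, y, hx, hy, hxy, rfl⟩
  rintro _ ⟨x, y, hx, hy, -, rfl⟩
  rw [normA_eq_norm_sqrt hA] at hx hy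
  rw [sip_eq_inner_sqrt hA]
  calc ‖⟪CFC.sqrt A y, CFC.sqrt A (T x)⟫_ℂ‖
    _ ≤ ‖CFC.sqrt A y‖ * ‖CFC.sqrt A (T x)‖ := norm_inner_le_norm _ _
    _ = ‖CFC.sqrt A (T x)‖ := by rw [hy, one_mul]
    _ ≤ Real.sqrt ‖S * T‖ := Real.le_sqrt_of_sq_le (hTS.norm_apply_sq_le_opNorm hx.le)

lemma norm_mul_norm_inner_le_wqA {T S : H →L[ℂ] H} (hA : A.IsPositive)
    (hrank : 2 ≤ Module.rank ℂ (LinearMap.range (A : H →ₗ[ℂ] H)))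
    (hTS : IsAdjointWrt (CFC.sqrt A) T S) {q : ℂ} (hq : ‖q‖ ≤ 1) {x : H}
    (hx : ‖CFC.sqrt A x‖ = 1) :
    ‖q‖ * ‖⟪CFC.sqrt A x, CFC.sqrt A (T x)⟫_ℂ‖ ≤ wqA A T q := by
  obtain ⟨z, hz, hxz⟩ := exists_norm_apply_eq_one_inner_eq_zero
    (hrank.trans (Submodule.rank_mono (range_le_range_sqrt hA))) (CFC.sqrt A x)
  obtain ⟨y, hy, hyx, hle⟩ := exists_norm_apply_eq_one_inner_eq_and_le hx hz hxz hq _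
  refine hle.trans ?_
  simpa only [sip_eq_inner_sqrt hA] using norm_sip_le_wqA hA hTS
    (by rwa [normA_eq_norm_sqrt hA]) (by rwa [normA_eq_norm_sqrt hA])
    (by rwa [sip_eq_inner_sqrt hA])

end PositiveOperator

lemma wqA_nonneg {X : Type*} [NormedAddCommGroup X] [InnerProductSpace ℂ X] (A T : X →L[ℂ] X)
    (q : ℂ) : 0 ≤ wqA A T q :=
  Real.sSup_nonneg fun _ ⟨_, _, _, _, _, h⟩ => h ▸ norm_nonneg _

lemma mul_opNormA_le {X : Type*} [NormedAddCommGroup X] [InnerProductSpace ℂ X]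
    {A R : X →L[ℂ] X} {c C : ℝ} (hc : 0 ≤ c) (hC : 0 ≤ C)
    (h : ∀ x, c * normA A (R x) ≤ C * normA A x) : c * opNormA A R ≤ C := by
  rw [opNormA, ← smul_eq_mul, ← Real.sSup_smul_of_nonneg hc]
  refine Real.sSup_le ?_ hC
  rintro _ ⟨_, ⟨x, -, -, rfl⟩, rfl⟩
  dsimp only
  rcases (show 0 ≤ normA A x from Real.sqrt_nonneg _).eq_or_lt with h0 | hpos
  · rw [← h0, div_zero, smul_zero]
    exact hC
  · rw [smul_eq_mul, ← mul_div_assoc, div_le_iff₀ hpos]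
    exact h x

theorem stmt3_general (A T S : H →L[ℂ] H) (hA : A.IsPositive)
    (hrank : 2 ≤ Module.rank ℂ (LinearMap.range (A : H →ₗ[ℂ] H)))
    (hS : A ∘L S = (ContinuousLinearMap.adjoint T) ∘L A)
    (q : ℂ) (hq : ‖q‖ ≤ 1) :
    ‖q‖ ^ 2 / 4 * opNormA A (S ∘L T + T ∘L S) ≤ (wqA A T q) ^ 2 := by
  set B := CFC.sqrt A
  have hTS : IsAdjointWrt B T S := isAdjointWrt_sqrt hA hS
  have hnum (x : H) (hx : ‖B x‖ = 1) : ‖⟪B x, B ((q • T) x)⟫_ℂ‖ ≤ wqA A T q := by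
    rw [smul_apply, map_smul, inner_smul_right, norm_mul]
    exact norm_mul_norm_inner_le_wqA hA hrank hTS hq hx
  have hbound := (hTS.smul q).norm_apply_mul_add_mul_le (wqA_nonneg A T q)
    (norm_inner_le_mul_sq_of_norm_eq_one hnum)
  have hsmul : (conj q • S) * (q • T) + (q • T) * (conj q • S)
      = ((‖q‖ ^ 2 : ℝ) : ℂ) • (S ∘L T + T ∘L S) := by
    rw [smul_mul_smul_comm, smul_mul_smul_comm, mul_comm q, Complex.conj_mul', ← smul_add]
    push_cast
    rfl
  refine mul_opNormA_le (by positivity) (by positivity) fun x => ?_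
  have hx := hbound x
  rw [hsmul, smul_apply, map_smul, norm_smul, Complex.norm_real,
    Real.norm_of_nonneg (by positivity)] at hx
  rw [normA_eq_norm_sqrt hA, normA_eq_norm_sqrt hA]
  linarith

theorem stmt3 (A T S : H →L[ℂ] H) (hA : A.IsPositive)
    (hrank : 2 ≤ Module.rank ℂ (LinearMap.range (A : H →ₗ[ℂ] H)))
    (hS : A ∘L S = (ContinuousLinearMap.adjoint T) ∘L A)
    (q : ℂ) (hq0 : q ≠ 0) (hq : ‖q‖ ≤ 1) :
    ‖q‖ ^ 2 / 4 * opNormA A (S ∘L T + T ∘L S) ≤ (wqA A T q) ^ 2 :=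
  stmt3_general A T S hA hrank hS q hq
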